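/- arXiv:2311.13751 — 2 statements merged into one kernel-verified Lean document; each statement's English description precedes it below -/
import Mathlib

section
/- The evolution equation for the internal variable preserves the unimodularity constraint: if Ċ^v = (c(t)) [C − (1/3)(C · C^{v⁻¹}) C^v] for a continuous scalar function c(t) and continuous symmetric positive-definite C(t), and det C^v(0) = 1, then det C^v(t) = 1 for all t, since tr(C^{v⁻¹} Ċ^v) = 0 along solutions. -/
open Matrix

/-- The evolution equation `Ċᵥ = c(t) [C − (1/3)(C · Cᵥ⁻¹) Cᵥ]` preserves the
unimodularity constraint: if `det Cᵥ(0) = 1` then `det Cᵥ(t) = 1` for all `t`. -/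
theorem det_Cv_eq_one_of_evolution
    (C Cv : ℝ → Matrix (Fin 3) (Fin 3) ℝ) (c : ℝ → ℝ)
    (hc : Continuous c)
    (hC_cont : ∀ i j, Continuous fun t => C t i j)
    (hC_symm : ∀ t, (C t).IsSymm) (hC_pd : ∀ t, (C t).PosDef)
    (hCv_symm : ∀ t, (Cv t).IsSymm) (hCv_pd : ∀ t, (Cv t).PosDef)
    (hODE : ∀ t i j, HasDerivAt (fun s => Cv s i j)
      ((c t • (C t - ((1 / 3) * ((C t * (Cv t)⁻¹).trace)) • Cv t)) i j) t)
    (hinit : (Cv 0).det = 1) :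
    ∀ t : ℝ, (Cv t).det = 1 := by
  have key : ∀ t, HasDerivAt (fun s => (Cv s).det) 0 t := by
    intro t
    set r : ℝ := (C t * (Cv t)⁻¹).trace with hr
    have hd : ∀ i j, HasDerivAt (fun s => Cv s i j)
        (c t * (C t i j - 1/3 * r * Cv t i j)) t := by
      intro i j
      have h := hODE t i j
      simpa [Matrix.smul_apply, Matrix.sub_apply, smul_eq_mul, mul_assoc] using h
    have hdet0 : (Cv t).det ≠ 0 := (hCv_pd t).det_pos.ne'
    have hsdet : r * (Cv t).det = (C t * (Cv t).adjugate).trace := by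
      rw [hr, Matrix.inv_def]
      rw [Matrix.mul_smul, Matrix.trace_smul, smul_eq_mul, Ring.inverse_eq_inv']
      field_simp
    -- expand hsdet into entries
    simp [Matrix.trace_fin_three, Matrix.mul_apply, Fin.sum_univ_three,
      Matrix.det_fin_three, Matrix.adjugate_fin_three, Matrix.cons_val_two] at hsdet
    have H : HasDerivAt (fun s => (Cv s).det)
        (c t * ((C t 0 0 * ((Cv t).adjugate 0 0) + C t 0 1 * ((Cv t).adjugate 1 0) + C t 0 2 * ((Cv t).adjugate 2 0)
          + C t 1 0 * ((Cv t).adjugate 0 1) + C t 1 1 * ((Cv t).adjugate 1 1) + C t 1 2 * ((Cv t).adjugate 2 1)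
          + C t 2 0 * ((Cv t).adjugate 0 2) + C t 2 1 * ((Cv t).adjugate 1 2) + C t 2 2 * ((Cv t).adjugate 2 2))
          - r * (Cv t).det)) t := by
      have heq : (fun s => (Cv s).det) = (fun s =>
          Cv s 0 0 * Cv s 1 1 * Cv s 2 2 - Cv s 0 0 * Cv s 1 2 * Cv s 2 1
          - Cv s 0 1 * Cv s 1 0 * Cv s 2 2 + Cv s 0 1 * Cv s 1 2 * Cv s 2 0
          + Cv s 0 2 * Cv s 1 0 * Cv s 2 1 - Cv s 0 2 * Cv s 1 1 * Cv s 2 0) :=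
        funext fun s => Matrix.det_fin_three _
      rw [heq]
      have H0 := (((((((hd 0 0).mul (hd 1 1)).mul (hd 2 2)).sub
        (((hd 0 0).mul (hd 1 2)).mul (hd 2 1))).sub
        (((hd 0 1).mul (hd 1 0)).mul (hd 2 2))).add
        (((hd 0 1).mul (hd 1 2)).mul (hd 2 0))).add
        (((hd 0 2).mul (hd 1 0)).mul (hd 2 1))).sub
        (((hd 0 2).mul (hd 1 1)).mul (hd 2 0))
      refine H0.congr_deriv ?_
      simp [Matrix.det_fin_three, Matrix.adjugate_fin_three, Matrix.cons_val_two]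
      ring
    have : (c t * ((C t 0 0 * ((Cv t).adjugate 0 0) + C t 0 1 * ((Cv t).adjugate 1 0) + C t 0 2 * ((Cv t).adjugate 2 0)
          + C t 1 0 * ((Cv t).adjugate 0 1) + C t 1 1 * ((Cv t).adjugate 1 1) + C t 1 2 * ((Cv t).adjugate 2 1)
          + C t 2 0 * ((Cv t).adjugate 0 2) + C t 2 1 * ((Cv t).adjugate 1 2) + C t 2 2 * ((Cv t).adjugate 2 2))
          - r * (Cv t).det)) = 0 := by
      simp [Matrix.det_fin_three, Matrix.adjugate_fin_three, Matrix.cons_val_two, -mul_eq_zero]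
      linear_combination (-(c t)) * hsdet
    rwa [this] at H
  have hdiff : Differentiable ℝ (fun s => (Cv s).det) := fun t => (key t).differentiableAt
  have hderiv : ∀ t, deriv (fun s => (Cv s).det) t = 0 := fun t => (key t).deriv
  intro t
  have := is_const_of_deriv_eq_zero hdiff hderiv t 0
  rw [this, hinit]
end

section
/- Free-energy dissipation along the flow: for ψ(C, C^v) = Ψ(tr(C C^{v⁻¹})) with Ψ' ≥ 0, and C^v evolving by Ċ^v = c [C − (1/3)(C : C^{v⁻¹}) C^v] with c ≥ 0 and C held fixed, the map t ↦ ψ(C, C^v(t)) is non-increasing; indeed d/dt ψ = −c Ψ' · tr(C^{v⁻¹} C C^{v⁻¹} [C − (1/3)(C : C^{v⁻¹}) C^v]) = −c Ψ' [ tr((C C^{v⁻¹})²) − (1/3)(tr(C C^{v⁻¹}))² ] ≤ 0 by Cauchy–Schwarz applied to the eigenvalues of C^{v−1/2} C C^{v−1/2}. -/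
open Matrix
open scoped MatrixOrder

attribute [local instance] Matrix.linftyOpNormedRing Matrix.linftyOpNormedAlgebra

/-- Cauchy-Schwarz trace inequality for symmetric 3×3 matrices. -/
lemma trace_sq_le_three_mul_trace_sq (B : Matrix (Fin 3) (Fin 3) ℝ) (hB : B.IsSymm) :
    (B.trace) ^ 2 ≤ 3 * (B * B).trace := by
  have h1 : (B * B).trace = ∑ i : Fin 3, ∑ j : Fin 3, (B i j) ^ 2 := by
    simp only [Matrix.trace, Matrix.diag, Matrix.mul_apply]
    refine Finset.sum_congr rfl fun i _ => Finset.sum_congr rfl fun j _ => ?_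
    have : B j i = B i j := by
      conv_lhs => rw [← hB]
      rfl
    rw [this, sq]
  have h2 : ∑ i : Fin 3, (B i i) ^ 2 ≤ ∑ i : Fin 3, ∑ j : Fin 3, (B i j) ^ 2 := by
    refine Finset.sum_le_sum fun i _ => ?_
    exact Finset.single_le_sum (fun j _ => sq_nonneg (B i j)) (Finset.mem_univ i)
  have h3 : (∑ i : Fin 3, B i i) ^ 2 ≤ 3 * ∑ i : Fin 3, (B i i) ^ 2 := by
    have := sq_sum_le_card_mul_sum_sq (s := (Finset.univ : Finset (Fin 3)))
      (f := fun i => B i i)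
    simpa using this
  calc (B.trace) ^ 2 = (∑ i : Fin 3, B i i) ^ 2 := rfl
    _ ≤ 3 * ∑ i : Fin 3, (B i i) ^ 2 := h3
    _ ≤ 3 * ((B * B).trace) := by rw [h1]; linarith

noncomputable def toMatL : (Fin 3 → Fin 3 → ℝ) →L[ℝ] Matrix (Fin 3) (Fin 3) ℝ :=
  LinearMap.toContinuousLinearMap
    { toFun := fun f => Matrix.of f
      map_add' := fun _ _ => rfl
      map_smul' := fun _ _ => rfl }

noncomputable def trCL (C : Matrix (Fin 3) (Fin 3) ℝ) : Matrix (Fin 3) (Fin 3) ℝ →L[ℝ] ℝ :=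
  LinearMap.toContinuousLinearMap
    ((Matrix.traceLinearMap (Fin 3) ℝ ℝ).comp (LinearMap.mulLeft ℝ C))

lemma inv_hasDerivAt (Cv : ℝ → Matrix (Fin 3) (Fin 3) ℝ) (hCv_pd : ∀ t, (Cv t).PosDef)
    (D : Matrix (Fin 3) (Fin 3) ℝ) (t : ℝ)
    (hD : ∀ i j, HasDerivAt (fun s => Cv s i j) (D i j) t) :
    HasDerivAt (fun s => (Cv s)⁻¹) (-((Cv t)⁻¹ * D * (Cv t)⁻¹)) t := by
  have hU : ∀ s, IsUnit (Cv s) := fun s => (hCv_pd s).isUnit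
  have hCvD : HasDerivAt Cv D t := by
    have hpi : HasDerivAt (fun s => (fun i j => Cv s i j)) (fun i j => D i j) t :=
      hasDerivAt_pi.2 fun i => hasDerivAt_pi.2 fun j => hD i j
    exact (toMatL.hasFDerivAt.comp_hasDerivAt t hpi)
  have h1 := (hasFDerivAt_ringInverse (𝕜 := ℝ) (hU t).unit).comp_hasDerivAt t hCvD
  have hu : (((hU t).unit⁻¹ : (Matrix (Fin 3) (Fin 3) ℝ)ˣ) : Matrix (Fin 3) (Fin 3) ℝ) = (Cv t)⁻¹ := by
    rw [Matrix.coe_units_inv, (hU t).unit_spec]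
  have h2 : HasDerivAt (fun s => Ring.inverse (Cv s)) (-((Cv t)⁻¹ * (D * (Cv t)⁻¹))) t := by
    refine h1.congr_deriv ?_
    simp [ContinuousLinearMap.mulLeftRight_apply, hu, mul_assoc]
  have h3 : (fun s => Ring.inverse (Cv s)) = fun s => (Cv s)⁻¹ := by
    funext s; rw [← Matrix.nonsing_inv_eq_ringInverse]
  rw [h3] at h2
  simpa [mul_assoc] using h2

/-- Free-energy dissipation along the flow: for `ψ(C, Cᵥ) = Ψ(tr(C Cᵥ⁻¹))`
with `Ψ' ≥ 0`, and `Cᵥ` evolving by `Ċᵥ = c [C − (1/3) tr(C Cᵥ⁻¹) Cᵥ]` with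
`c ≥ 0` and `C` held fixed, the map `t ↦ ψ(C, Cᵥ(t))` is non-increasing. -/
theorem free_energy_dissipation
    (C : Matrix (Fin 3) (Fin 3) ℝ) (hC_symm : C.IsSymm) (hC_pd : C.PosDef)
    (Cv : ℝ → Matrix (Fin 3) (Fin 3) ℝ)
    (hCv_symm : ∀ t, (Cv t).IsSymm) (hCv_pd : ∀ t, (Cv t).PosDef)
    (c : ℝ) (hc : 0 ≤ c)
    (hODE : ∀ t i j, HasDerivAt (fun s => Cv s i j)
      ((c • (C - ((1 / 3) * (C * (Cv t)⁻¹).trace) • Cv t)) i j) t)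
    (Ψ : ℝ → ℝ) (hΨ : Differentiable ℝ Ψ) (hΨ' : ∀ x, 0 ≤ deriv Ψ x) :
    Antitone fun t => Ψ ((C * (Cv t)⁻¹).trace) := by
  set f : ℝ → ℝ := fun s => (C * (Cv s)⁻¹).trace with hfdef
  -- derivative of f
  have hf : ∀ t, HasDerivAt f
      ((C * -((Cv t)⁻¹ * (c • (C - ((1 / 3) * (C * (Cv t)⁻¹).trace) • Cv t)) * (Cv t)⁻¹)).trace) t := by
    intro t
    have h := inv_hasDerivAt Cv hCv_pd _ t (fun i j => hODE t i j)
    have h2 := (trCL C).hasFDerivAt.comp_hasDerivAt t h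
    exact h2
  -- rewrite the derivative value
  have hval : ∀ t, (C * -((Cv t)⁻¹ * (c • (C - ((1 / 3) * (C * (Cv t)⁻¹).trace) • Cv t)) * (Cv t)⁻¹)).trace
      = -(c * ((C * (Cv t)⁻¹ * C * (Cv t)⁻¹).trace
          - (1 / 3) * (C * (Cv t)⁻¹).trace * (C * (Cv t)⁻¹).trace)) := by
    intro t
    set N := (Cv t)⁻¹ with hN
    have hNA : N * Cv t = 1 := Matrix.nonsing_inv_mul (Cv t) (hCv_pd t).det_pos.ne'.isUnit
    simp only [smul_sub, Matrix.mul_sub, Matrix.sub_mul, Matrix.mul_smul, Matrix.smul_mul,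
      Matrix.mul_neg, Matrix.trace_neg, Matrix.trace_sub, Matrix.trace_smul, smul_eq_mul]
    rw [show N * Cv t * N = N from by rw [hNA, Matrix.one_mul],
        show C * (N * C * N) = C * N * C * N from by simp [Matrix.mul_assoc]]
    ring
  -- the derivative is nonpositive
  have hle : ∀ t, (C * -((Cv t)⁻¹ * (c • (C - ((1 / 3) * (C * (Cv t)⁻¹).trace) • Cv t)) * (Cv t)⁻¹)).trace ≤ 0 := by
    intro t
    rw [hval t]
    set N := (Cv t)⁻¹ with hN
    have hNpd : N.PosDef := (hCv_pd t).inv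
    set S := CFC.sqrt N with hSdef
    have hSS : S * S = N := by
      exact CFC.sqrt_mul_sqrt_self N hNpd.posSemidef.nonneg
    have hS_symm : S.IsSymm := by
      have h := (CFC.sqrt_nonneg N).posSemidef.1
      rw [Matrix.IsSymm, ← Matrix.conjTranspose_eq_transpose_of_trivial, h]
    set M := S * C * S with hMdef
    have hM_symm : M.IsSymm := by
      rw [Matrix.IsSymm, hMdef, Matrix.transpose_mul, Matrix.transpose_mul, hS_symm, hC_symm]
      simp [Matrix.mul_assoc]
    have htrM : M.trace = (C * N).trace := by
      rw [hMdef, Matrix.trace_mul_comm (S * C) S, ← Matrix.mul_assoc, hSS,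
        Matrix.trace_mul_comm N C]
    have htrM2 : (M * M).trace = (C * N * C * N).trace := by
      have hMM : M * M = S * (C * N * C * S) := by
        rw [← hSS, hMdef]; simp [Matrix.mul_assoc]
      rw [hMM, Matrix.trace_mul_comm S (C * N * C * S), Matrix.mul_assoc, hSS]
    have key := trace_sq_le_three_mul_trace_sq M hM_symm
    rw [htrM, htrM2] at key
    have h9 : 0 ≤ (C * N * C * N).trace - 1 / 3 * (C * N).trace * (C * N).trace := by
      nlinarith [key]
    have := mul_nonneg hc h9
    linarith
  -- conclude
  have hg : ∀ t, HasDerivAt (fun t => Ψ (f t))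
      (deriv Ψ (f t) * (C * -((Cv t)⁻¹ * (c • (C - ((1 / 3) * (C * (Cv t)⁻¹).trace) • Cv t)) * (Cv t)⁻¹)).trace) t :=
    fun t => ((hΨ (f t)).hasDerivAt).comp t (hf t)
  refine antitone_of_deriv_nonpos (fun t => (hg t).differentiableAt) fun t => ?_
  rw [(hg t).deriv]
  have := mul_nonneg (hΨ' (f t)) (neg_nonneg.2 (hle t))
  linarith
end
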